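/- arXiv:0904.0656 — 3 statements merged into one kernel-verified Lean document; each statement's English description precedes it below -/
import Mathlib

section
/- If p is a polynomial in n variables, homogeneous of degree m, then on any domain D ⊆ ℝ₊ⁿ \ {0}, L((∑_i z_i)^{1−θ₀/2−2m} p(z)) = (∑_i z_i)^{1−θ₀/2−2m} L p(z), where L = ∑_i θ_i ∂_i + 2∑_i z_i ∂_i². -/
/-!
Write `s = ∑ zᵢ` and `a = 1 − θ₀/2 − 2m`. The product rule for `L` gives
`L(s^a p) = s^a Lp + p L(s^a) + 4 ∑ zᵢ ∂ᵢ(s^a) ∂ᵢp`. Since `∂ᵢ(s^a) = a s^(a−1)` for every `i`,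
Euler's identity `∑ zᵢ ∂ᵢp = m p` turns the cross term into `4am s^(a−1) p`, while
`L(s^a) = a s^(a−1) (θ₀ + 2(a − 1))`; the exponent `a` is exactly the one for which these two
contributions cancel.
-/

open Finset

/-- Partial derivative in the `i`-th coordinate direction. -/
noncomputable def pd {n : ℕ} (i : Fin n) (f : (Fin n → ℝ) → ℝ) (z : Fin n → ℝ) : ℝ :=
  fderiv ℝ f z (Pi.single i 1)

/-- The generator `L u = ∑ θᵢ ∂ᵢ u + 2 ∑ zᵢ ∂ᵢ² u`. -/
noncomputable def Lop {n : ℕ} (θ : Fin n → ℝ) (f : (Fin n → ℝ) → ℝ) (z : Fin n → ℝ) : ℝ :=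
  ∑ i, θ i * pd i f z + 2 * ∑ i, z i * pd i (fun w => pd i f w) z

lemma fderiv_apply_self_of_homogeneous {E : Type*} [NormedAddCommGroup E] [NormedSpace ℝ E]
    {u : E → ℝ} {m : ℕ} {x : E} (hu : ∀ α : ℝ, 0 < α → u (α • x) = α ^ m * u x)
    (hd : DifferentiableAt ℝ u x) :
    fderiv ℝ u x x = m * u x := by
  have hray : HasDerivAt (fun α : ℝ => u (α • x)) (fderiv ℝ u x x) 1 := by
    have hsmul : HasDerivAt (fun α : ℝ => α • x) x 1 := by
      simpa using (hasDerivAt_id (1 : ℝ)).smul_const x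
    exact hd.hasFDerivAt.comp_hasDerivAt_of_eq 1 hsmul (one_smul ℝ x).symm
  have hpow : HasDerivAt (fun α : ℝ => u (α • x)) (m * u x) 1 := by
    refine HasDerivAt.congr_of_eventuallyEq ?_
      (Filter.eventually_of_mem (Ioi_mem_nhds one_pos) hu)
    simpa using (hasDerivAt_pow m (1 : ℝ)).mul_const (u x)
  exact hray.unique hpow

section PartialDerivatives

variable {n : ℕ} {i : Fin n} {f g : (Fin n → ℝ) → ℝ} {z : Fin n → ℝ}

lemma pd_congr_of_eventuallyEq (h : f =ᶠ[nhds z] g) : pd i f z = pd i g z := by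
  rw [pd, pd, h.fderiv_eq]

lemma pd_add (hf : DifferentiableAt ℝ f z) (hg : DifferentiableAt ℝ g z) :
    pd i (fun w => f w + g w) z = pd i f z + pd i g z := by
  simp [pd, fderiv_fun_add hf hg]

lemma pd_mul (hf : DifferentiableAt ℝ f z) (hg : DifferentiableAt ℝ g z) :
    pd i (fun w => f w * g w) z = pd i f z * g z + f z * pd i g z := by
  simp [pd, fderiv_fun_mul hf hg]
  ring

lemma differentiableAt_pd (hf : ContDiffAt ℝ 2 f z) : DifferentiableAt ℝ (pd i f) z :=
  ((hf.fderiv_right (m := 1) le_rfl).differentiableAt one_ne_zero).clm_apply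
    (differentiableAt_const _)

lemma pd_pd_mul (hf : ContDiffAt ℝ 2 f z) (hg : ContDiffAt ℝ 2 g z) :
    pd i (fun w => pd i (fun v => f v * g v) w) z
      = pd i (fun w => pd i f w) z * g z + 2 * (pd i f z * pd i g z)
        + f z * pd i (fun w => pd i g w) z := by
  have hprod : (fun w => pd i (fun v => f v * g v) w)
      =ᶠ[nhds z] fun w => pd i f w * g w + f w * pd i g w := by
    filter_upwards [hf.eventually (by simp), hg.eventually (by simp)] with w hfw hgw
    exact pd_mul (hfw.differentiableAt two_ne_zero) (hgw.differentiableAt two_ne_zero)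
  have hf1 := hf.differentiableAt two_ne_zero
  have hg1 := hg.differentiableAt two_ne_zero
  have hf2 := differentiableAt_pd (i := i) hf
  have hg2 := differentiableAt_pd (i := i) hg
  rw [pd_congr_of_eventuallyEq hprod, pd_add (hf2.fun_mul hg1) (hf1.fun_mul hg2),
    pd_mul hf2 hg1, pd_mul hf1 hg2]
  ring

lemma Lop_mul (θ : Fin n → ℝ) (hf : ContDiffAt ℝ 2 f z) (hg : ContDiffAt ℝ 2 g z) :
    Lop θ (fun w => f w * g w) z
      = f z * Lop θ g z + g z * Lop θ f z + 4 * ∑ i, z i * pd i f z * pd i g z := by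
  have hf1 := hf.differentiableAt two_ne_zero
  have hg1 := hg.differentiableAt two_ne_zero
  simp only [Lop, pd_mul hf1 hg1, pd_pd_mul hf hg, mul_add, mul_sum, ← sum_add_distrib]
  exact sum_congr rfl fun i _ => by ring

lemma sum_mul_pd (f : (Fin n → ℝ) → ℝ) (z : Fin n → ℝ) :
    ∑ i, z i * pd i f z = fderiv ℝ f z z := by
  conv_rhs => enter [2]; rw [← univ_sum_single z]
  simp only [pd, map_sum]
  refine sum_congr rfl fun i _ => ?_
  rw [← smul_eq_mul, ← map_smul, ← Pi.single_smul', smul_eq_mul, mul_one]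

end PartialDerivatives

section PowerOfCoordinateSum

variable {n : ℕ} {i : Fin n} {z : Fin n → ℝ}

lemma hasFDerivAt_rpow_sum (b : ℝ) (hz : 0 < ∑ j, z j) :
    HasFDerivAt (fun w : Fin n → ℝ => (∑ j, w j) ^ b)
      ((b * (∑ j, z j) ^ (b - 1)) • ∑ j : Fin n, ContinuousLinearMap.proj (R := ℝ) j) z :=
  (HasFDerivAt.fun_sum fun j _ => hasFDerivAt_apply j z).rpow_const (Or.inl hz.ne')

lemma pd_rpow_sum (b : ℝ) (hz : 0 < ∑ j, z j) :
    pd i (fun w => (∑ j, w j) ^ b) z = b * (∑ j, z j) ^ (b - 1) := by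
  simp [pd, (hasFDerivAt_rpow_sum b hz).fderiv]

lemma pd_pd_rpow_sum (b : ℝ) (hz : 0 < ∑ j, z j) :
    pd i (fun w => pd i (fun v => (∑ j, v j) ^ b) w) z
      = b * (b - 1) * (∑ j, z j) ^ (b - 2) := by
  have hopen : IsOpen {w : Fin n → ℝ | 0 < ∑ j, w j} :=
    isOpen_lt continuous_const (by fun_prop)
  have hpd : (fun w => pd i (fun v => (∑ j, v j) ^ b) w) =ᶠ[nhds z]
      fun w => b * (∑ j, w j) ^ (b - 1) :=
    Filter.eventually_of_mem (hopen.mem_nhds hz) fun w hw => pd_rpow_sum b hw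
  rw [pd_congr_of_eventuallyEq hpd, pd,
    ((hasFDerivAt_rpow_sum (b - 1) hz).const_mul b).fderiv]
  simp [Pi.single_apply, show b - 1 - 1 = b - 2 by ring]
  ring

lemma Lop_rpow_sum (θ : Fin n → ℝ) (b : ℝ) (hz : 0 < ∑ j, z j) :
    Lop θ (fun w => (∑ j, w j) ^ b) z
      = b * (∑ j, z j) ^ (b - 1) * ((∑ j, θ j) + 2 * (b - 1)) := by
  have hpow : (∑ j, z j) ^ (b - 1) = (∑ j, z j) ^ (b - 2) * ∑ j, z j := by
    rw [← Real.rpow_add_one hz.ne']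
    ring_nf
  simp only [Lop, pd_rpow_sum b hz, pd_pd_rpow_sum b hz, ← sum_mul]
  rw [hpow]
  ring

end PowerOfCoordinateSum

theorem stmt1_general (n : ℕ) (θ : Fin n → ℝ) (m : ℕ)
    (p : MvPolynomial (Fin n) ℝ)
    (hp : ∀ α : ℝ, 0 < α → ∀ z : Fin n → ℝ,
      MvPolynomial.eval (α • z) p = α ^ m * MvPolynomial.eval z p)
    (z : Fin n → ℝ) (hz : ∀ i, 0 ≤ z i) (hz0 : z ≠ 0) :
    Lop θ (fun w => (∑ i, w i) ^ ((1 : ℝ) - (∑ i, θ i) / 2 - 2 * m)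
        * MvPolynomial.eval w p) z
      = (∑ i, z i) ^ ((1 : ℝ) - (∑ i, θ i) / 2 - 2 * m)
        * Lop θ (fun w => MvPolynomial.eval w p) z := by
  have hs : 0 < ∑ i, z i := by
    obtain ⟨j, hj⟩ := Function.ne_iff.mp hz0
    exact sum_pos' (fun i _ => hz i) ⟨j, mem_univ j, (hz j).lt_of_ne' hj⟩
  set a : ℝ := 1 - (∑ i, θ i) / 2 - 2 * m with ha
  set u : (Fin n → ℝ) → ℝ := fun w => MvPolynomial.eval w p
  have hg : ContDiffAt ℝ 2 (fun w : Fin n → ℝ => (∑ i, w i) ^ a) z :=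
    (ContDiffAt.sum fun i _ => (contDiff_apply ℝ ℝ i).contDiffAt).rpow_const_of_ne hs.ne'
  have hu : ContDiffAt ℝ 2 u z := (AnalyticOnNhd.eval_mvPolynomial p z trivial).contDiffAt
  have heuler : ∑ i, z i * pd i u z = m * u z := by
    rw [sum_mul_pd]
    exact fderiv_apply_self_of_homogeneous (fun α hα => hp α hα z)
      (hu.differentiableAt two_ne_zero)
  have hcross : ∑ i, z i * pd i (fun w => (∑ j, w j) ^ a) z * pd i u z
      = a * (∑ j, z j) ^ (a - 1) * (m * u z) := by
    rw [← heuler, mul_sum]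
    exact sum_congr rfl fun i _ => by rw [pd_rpow_sum a hs]; ring
  have hexponent : (∑ i, θ i) + 2 * (a - 1) + 4 * m = 0 := by rw [ha]; ring
  rw [Lop_mul θ hg hu, Lop_rpow_sum θ a hs, hcross]
  linear_combination (u z * a * (∑ j, z j) ^ (a - 1)) * hexponent

/-- if `p` is a polynomial homogeneous of degree `m`, then on the
punctured nonnegative orthant,
`L((∑ zᵢ)^(1−θ₀/2−2m) p(z)) = (∑ zᵢ)^(1−θ₀/2−2m) L p(z)`. -/
theorem stmt1 (n : ℕ) (θ : Fin n → ℝ) (hθ : ∀ i, 0 ≤ θ i) (m : ℕ)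
    (p : MvPolynomial (Fin n) ℝ)
    (hp : ∀ α : ℝ, 0 < α → ∀ z : Fin n → ℝ,
      MvPolynomial.eval (α • z) p = α ^ m * MvPolynomial.eval z p)
    (z : Fin n → ℝ) (hz : ∀ i, 0 ≤ z i) (hz0 : z ≠ 0) :
    Lop θ (fun w => (∑ i, w i) ^ ((1 : ℝ) - (∑ i, θ i) / 2 - 2 * m)
        * MvPolynomial.eval w p) z
      = (∑ i, z i) ^ ((1 : ℝ) - (∑ i, θ i) / 2 - 2 * m)
        * Lop θ (fun w => MvPolynomial.eval w p) z :=
  stmt1_general n θ m p hp z hz hz0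
end

section
/- Let u be C² on a domain D ⊆ ℝ₊ⁿ \ {0}, and define the generalized Kelvin transform K[u](z) = (∑_i z_i)^{1−θ₀/2} u(I(z)) on I(D), where I(z) = z/(∑_i z_i)². If u satisfies L u = 0 on D, then K[u] satisfies L K[u] = 0 on I(D), where L = ∑_i θ_i ∂_i + 2∑_i z_i ∂_i² and θ₀ = ∑_i θ_i > 2. More generally, L K[u](z) = K[Ψ](z) where Ψ(z) = (∑_i z_i)² L u(z). -/
open Finset

/-- The inversion map `I(z) = z / (∑ zᵢ)²`. -/
noncomputable def invMap {n : ℕ} (z : Fin n → ℝ) : Fin n → ℝ :=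
  fun i => z i / (∑ j, z j) ^ 2

/-- The generalized Kelvin transform `K[u](z) = (∑ zᵢ)^(1−θ₀/2) u(I(z))`. -/
noncomputable def kelvin {n : ℕ} (θ : Fin n → ℝ) (u : (Fin n → ℝ) → ℝ)
    (z : Fin n → ℝ) : ℝ :=
  (∑ i, z i) ^ ((1 : ℝ) - (∑ i, θ i) / 2) * u (invMap z)

/-!
Write `s = ∑ zᵢ`, `y = I(z)`, `K_b[f](z) = s^b f(y)` and `E f(y) = Df(y) y` for the
Euler operator. The chain rule, with `DI(z) v = s⁻² v - 2 s⁻¹ (∑ vᵢ) y`, gives the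
first-order rule `∂ᵢ K_b[f] = K_{b-2}[∂ᵢ f] + K_{b-1}[b f - 2 E f]`. Applying it twice and
summing against `θᵢ` and `2 zᵢ = 2 s² yᵢ`, the terms in `Du(y) y` and `D²u(y) y y` cancel:
`L K_a[u] = K_{a-2}[L u] + (θ₀ + 2a - 2) K_{a-1}[a u - 2 E u]`. The Kelvin exponent
`a = 1 - θ₀/2` kills the last term, and `K_{a-2}[L u] = K_a[s² L u]` since `∑ yᵢ = s⁻¹`.
-/

section KelvinTransform

variable {n : ℕ}

noncomputable def coordSum : (Fin n → ℝ) →L[ℝ] ℝ :=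
  ∑ i, ContinuousLinearMap.proj i

@[simp] lemma coordSum_apply (v : Fin n → ℝ) : coordSum v = ∑ i, v i := by
  simp [coordSum]

lemma sum_mul_apply_single (L : (Fin n → ℝ) →L[ℝ] ℝ) (x : Fin n → ℝ) :
    ∑ i, x i * L (Pi.single i 1) = L x := by
  conv_rhs => rw [← univ_sum_single x]
  rw [map_sum]
  refine sum_congr rfl fun i _ => ?_
  rw [← smul_eq_mul, ← map_smul, ← Pi.single_smul', smul_eq_mul, mul_one]

lemma sum_mul_const_mul (w X : Fin n → ℝ) (c : ℝ) :
    ∑ i, w i * (c * X i) = c * ∑ i, w i * X i := by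
  rw [mul_sum]
  exact sum_congr rfl fun i _ => mul_left_comm _ _ _

lemma sum_invMap {z : Fin n → ℝ} (hz : ∑ i, z i ≠ 0) :
    ∑ i, invMap z i = (∑ i, z i)⁻¹ := by
  simp only [invMap, ← sum_div]
  field_simp

lemma hasFDerivAt_sum (z : Fin n → ℝ) :
    HasFDerivAt (fun w : Fin n → ℝ => ∑ i, w i) coordSum z := by
  simpa [coordSum] using HasFDerivAt.fun_sum fun i _ => hasFDerivAt_apply (𝕜 := ℝ) i z

lemma hasFDerivAt_invMap {z : Fin n → ℝ} (hz : ∑ i, z i ≠ 0) :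
    HasFDerivAt invMap (((∑ i, z i) ^ 2)⁻¹ • ContinuousLinearMap.id ℝ (Fin n → ℝ)
      - (2 / ∑ i, z i) • (coordSum).smulRight (invMap z)) z := by
  have hinv := (hasDerivAt_inv (pow_ne_zero 2 hz)).comp_hasFDerivAt z ((hasFDerivAt_sum z).pow 2)
  have h := hinv.smul (hasFDerivAt_id z)
  have hfun : invMap = fun w : Fin n → ℝ => ((∑ i, w i) ^ 2)⁻¹ • w := by
    funext w i
    simp [invMap, div_eq_inv_mul]
  rw [hfun]
  refine h.congr_fderiv ?_
  ext v i
  simp only [Function.comp_apply, nsmul_eq_mul, Nat.cast_ofNat, neg_smul, id_eq, add_apply,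
    smul_apply, ContinuousLinearMap.id_apply, ContinuousLinearMap.smulRight_apply, neg_apply,
    coordSum_apply, smul_eq_mul, Pi.add_apply, Pi.smul_apply, Pi.neg_apply, sub_apply, Pi.sub_apply]
  field_simp
  ring

noncomputable def kelvinPow (b : ℝ) (f : (Fin n → ℝ) → ℝ) (z : Fin n → ℝ) : ℝ :=
  (∑ i, z i) ^ b * f (invMap z)

lemma kelvin_eq_kelvinPow (θ : Fin n → ℝ) (u : (Fin n → ℝ) → ℝ) :
    kelvin θ u = kelvinPow (1 - (∑ i, θ i) / 2) u :=
  rfl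

noncomputable def euler (f : (Fin n → ℝ) → ℝ) (y : Fin n → ℝ) : ℝ :=
  fderiv ℝ f y y

noncomputable def eulerShift (b : ℝ) (f : (Fin n → ℝ) → ℝ) (y : Fin n → ℝ) : ℝ :=
  b * f y - 2 * euler f y

lemma hasFDerivAt_kelvinPow (b : ℝ) {f : (Fin n → ℝ) → ℝ} {z : Fin n → ℝ}
    (hz : 0 < ∑ i, z i) (hf : DifferentiableAt ℝ f (invMap z)) :
    HasFDerivAt (kelvinPow b f)
      ((∑ i, z i) ^ (b - 2) • fderiv ℝ f (invMap z)
        + ((∑ i, z i) ^ (b - 1) * eulerShift b f (invMap z)) • coordSum) z := by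
  have h := ((hasFDerivAt_sum z).rpow_const (p := b) (Or.inl hz.ne')).mul
    (hf.hasFDerivAt.comp z (hasFDerivAt_invMap hz.ne'))
  refine h.congr_fderiv ?_
  ext v
  simp only [ContinuousLinearMap.comp_sub, ContinuousLinearMap.comp_smulₛₗ, map_inv₀,
    Real.ringHom_apply, ContinuousLinearMap.comp_id, map_div₀, map_sum, Function.comp_apply,
    Real.rpow_sub hz, Real.rpow_one, Real.rpow_ofNat, add_apply, smul_apply, sub_apply, smul_eq_mul,
    ContinuousLinearMap.comp_apply, ContinuousLinearMap.smulRight_apply, coordSum_apply, map_smul,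
    eulerShift, euler]
  field_simp
  ring

lemma differentiableAt_kelvinPow (b : ℝ) {f : (Fin n → ℝ) → ℝ} {z : Fin n → ℝ}
    (hz : 0 < ∑ i, z i) (hf : DifferentiableAt ℝ f (invMap z)) :
    DifferentiableAt ℝ (kelvinPow b f) z :=
  (hasFDerivAt_kelvinPow b hz hf).differentiableAt

lemma pd_kelvinPow (b : ℝ) (i : Fin n) {f : (Fin n → ℝ) → ℝ} {z : Fin n → ℝ}
    (hz : 0 < ∑ i, z i) (hf : DifferentiableAt ℝ f (invMap z)) :
    pd i (kelvinPow b f) z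
      = kelvinPow (b - 2) (pd i f) z + kelvinPow (b - 1) (eulerShift b f) z := by
  simp [pd, (hasFDerivAt_kelvinPow b hz hf).fderiv, kelvinPow]

lemma hasFDerivAt_pd (i : Fin n) {f : (Fin n → ℝ) → ℝ} {y : Fin n → ℝ}
    (hf : DifferentiableAt ℝ (fderiv ℝ f) y) :
    HasFDerivAt (pd i f) ((fderiv ℝ (fderiv ℝ f) y).flip (Pi.single i 1)) y := by
  have h := hf.hasFDerivAt.clm_apply (hasFDerivAt_const (Pi.single i (1 : ℝ)) y)
  simp only [ContinuousLinearMap.comp_zero, zero_add] at h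
  exact h

lemma hasFDerivAt_euler {f : (Fin n → ℝ) → ℝ} {y : Fin n → ℝ}
    (hf : DifferentiableAt ℝ (fderiv ℝ f) y) :
    HasFDerivAt (euler f) (fderiv ℝ f y + (fderiv ℝ (fderiv ℝ f) y).flip y) y := by
  have h := hf.hasFDerivAt.clm_apply (hasFDerivAt_id y)
  simp only [ContinuousLinearMap.comp_id, id] at h
  exact h

lemma hasFDerivAt_eulerShift (b : ℝ) {f : (Fin n → ℝ) → ℝ} {y : Fin n → ℝ}
    (hf : DifferentiableAt ℝ f y) (hf' : DifferentiableAt ℝ (fderiv ℝ f) y) :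
    HasFDerivAt (eulerShift b f)
      ((b - 2) • fderiv ℝ f y - (2 : ℝ) • (fderiv ℝ (fderiv ℝ f) y).flip y) y := by
  refine ((hf.hasFDerivAt.const_mul b).sub
    ((hasFDerivAt_euler hf').const_mul 2)).congr_fderiv ?_
  ext v
  simp only [smul_add, sub_apply, smul_apply, smul_eq_mul, add_apply,
    ContinuousLinearMap.flip_apply]
  ring

lemma eventually_sum_pos_and_differentiableAt_invMap {f : (Fin n → ℝ) → ℝ}
    {z : Fin n → ℝ} (hz : 0 < ∑ i, z i) (hf : ContDiffAt ℝ 2 f (invMap z)) :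
    ∀ᶠ w in nhds z, 0 < ∑ i, w i ∧ DifferentiableAt ℝ f (invMap w) := by
  have hpos : ∀ᶠ w in nhds z, 0 < ∑ i, w i :=
    (hasFDerivAt_sum z).continuousAt.eventually (lt_mem_nhds hz)
  have hdiff := (hasFDerivAt_invMap hz.ne').continuousAt.eventually
    ((hf.eventually (by simp)).mono fun y hy => hy.differentiableAt (by norm_num))
  exact hpos.and hdiff

lemma pd_pd_kelvinPow (a : ℝ) (i : Fin n) {u : (Fin n → ℝ) → ℝ} {z : Fin n → ℝ}
    (hz : 0 < ∑ i, z i) (hu : ContDiffAt ℝ 2 u (invMap z)) :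
    pd i (pd i (kelvinPow a u)) z
      = (kelvinPow (a - 4) (pd i (pd i u)) z + kelvinPow (a - 3) (eulerShift (a - 2) (pd i u)) z)
        + (kelvinPow (a - 3) (pd i (eulerShift a u)) z
          + kelvinPow (a - 2) (eulerShift (a - 1) (eulerShift a u)) z) := by
  have hu1 : DifferentiableAt ℝ u (invMap z) := hu.differentiableAt (by norm_num)
  have hu2 : DifferentiableAt ℝ (fderiv ℝ u) (invMap z) :=
    (hu.fderiv_right (m := 1) (by norm_num)).differentiableAt one_ne_zero
  have hpd := (hasFDerivAt_pd i hu2).differentiableAt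
  have hshift := (hasFDerivAt_eulerShift a hu1 hu2).differentiableAt
  have hnear : pd i (kelvinPow a u) =ᶠ[nhds z]
      kelvinPow (a - 2) (pd i u) + kelvinPow (a - 1) (eulerShift a u) :=
    (eventually_sum_pos_and_differentiableAt_invMap hz hu).mono fun w hw =>
      pd_kelvinPow a i hw.1 hw.2
  rw [pd, hnear.fderiv_eq, fderiv_add (differentiableAt_kelvinPow _ hz hpd)
    (differentiableAt_kelvinPow _ hz hshift), add_apply, ← pd, ← pd,
    pd_kelvinPow _ i hz hpd, pd_kelvinPow _ i hz hshift]
  ring_nf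

section SecondOrder

variable {f : (Fin n → ℝ) → ℝ} {y : Fin n → ℝ}

lemma pd_pd_apply (i : Fin n) (hf : DifferentiableAt ℝ (fderiv ℝ f) y) :
    pd i (pd i f) y = fderiv ℝ (fderiv ℝ f) y (Pi.single i 1) (Pi.single i 1) := by
  simp [pd, (hasFDerivAt_pd i hf).fderiv]

lemma eulerShift_pd_apply (b : ℝ) (i : Fin n) (hf : DifferentiableAt ℝ (fderiv ℝ f) y) :
    eulerShift b (pd i f) y
      = b * fderiv ℝ f y (Pi.single i 1) - 2 * fderiv ℝ (fderiv ℝ f) y y (Pi.single i 1) := by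
  simp [eulerShift, euler, pd, (hasFDerivAt_pd i hf).fderiv]

lemma pd_eulerShift_apply (b : ℝ) (i : Fin n) (hf : DifferentiableAt ℝ f y)
    (hf' : DifferentiableAt ℝ (fderiv ℝ f) y) :
    pd i (eulerShift b f) y
      = (b - 2) * fderiv ℝ f y (Pi.single i 1)
        - 2 * (fderiv ℝ (fderiv ℝ f) y).flip y (Pi.single i 1) := by
  simp [pd, (hasFDerivAt_eulerShift b hf hf').fderiv]

lemma eulerShift_eulerShift_apply (b c : ℝ) (hf : DifferentiableAt ℝ f y)
    (hf' : DifferentiableAt ℝ (fderiv ℝ f) y) :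
    eulerShift c (eulerShift b f) y
      = c * eulerShift b f y
        - 2 * ((b - 2) * fderiv ℝ f y y - 2 * fderiv ℝ (fderiv ℝ f) y y y) := by
  rw [eulerShift, euler, (hasFDerivAt_eulerShift b hf hf').fderiv]
  simp

end SecondOrder

lemma sum_mul_eq_sq_sum_mul_sum_invMap {z : Fin n → ℝ} (hz : ∑ i, z i ≠ 0)
    (X : Fin n → ℝ) :
    ∑ i, z i * X i = (∑ i, z i) ^ 2 * ∑ i, invMap z i * X i := by
  rw [mul_sum]
  refine sum_congr rfl fun i _ => ?_
  simp only [invMap]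
  field_simp

lemma Lop_kelvinPow (θ : Fin n → ℝ) (a : ℝ) {u : (Fin n → ℝ) → ℝ} {z : Fin n → ℝ}
    (hz : 0 < ∑ i, z i) (hu : ContDiffAt ℝ 2 u (invMap z)) :
    Lop θ (kelvinPow a u) z
      = kelvinPow (a - 2) (Lop θ u) z
        + (∑ i, θ i + 2 * a - 2) * kelvinPow (a - 1) (eulerShift a u) z := by
  have hu1 : DifferentiableAt ℝ u (invMap z) := hu.differentiableAt (by norm_num)
  have hu2 : DifferentiableAt ℝ (fderiv ℝ u) (invMap z) :=
    (hu.fderiv_right (m := 1) (by norm_num)).differentiableAt one_ne_zero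
  simp only [Lop, pd_kelvinPow a _ hz hu1, pd_pd_kelvinPow a _ hz hu, kelvinPow,
    pd_pd_apply _ hu2, eulerShift_pd_apply _ _ hu2, pd_eulerShift_apply _ _ hu1 hu2,
    eulerShift_eulerShift_apply _ _ hu1 hu2]
  -- Summing against `zᵢ = s² yᵢ`, every `∑ zᵢ ℓ(eᵢ)` collapses to `s² ℓ(y)`.
  simp only [mul_add, mul_sub, sum_add_distrib, sum_sub_distrib, sum_mul_const_mul,
    ← sum_mul, sum_mul_eq_sq_sum_mul_sum_invMap hz.ne', sum_mul_apply_single]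
  simp only [ContinuousLinearMap.flip_apply, sum_invMap hz.ne', Real.rpow_sub hz, Real.rpow_one,
    Real.rpow_ofNat]
  field_simp
  ring

lemma kelvinPow_sub_two (b : ℝ) (f : (Fin n → ℝ) → ℝ) {z : Fin n → ℝ}
    (hz : 0 < ∑ i, z i) :
    kelvinPow (b - 2) f z = kelvinPow b (fun w => (∑ i, w i) ^ 2 * f w) z := by
  simp only [kelvinPow, sum_invMap hz.ne', Real.rpow_sub hz, Real.rpow_ofNat]
  field_simp

end KelvinTransform

theorem stmt5_general (n : ℕ) (θ : Fin n → ℝ)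
    (U : Set (Fin n → ℝ)) (hUopen : IsOpen U)
    (u : (Fin n → ℝ) → ℝ) (hu : ContDiffOn ℝ 2 u U)
    (z : Fin n → ℝ) (hznn : ∀ i, 0 ≤ z i) (hz0 : z ≠ 0) (hzU : invMap z ∈ U) :
    Lop θ (kelvin θ u) z
        = kelvin θ (fun w => (∑ i, w i) ^ 2 * Lop θ u w) z
      ∧ ((∀ w ∈ U, Lop θ u w = 0) → Lop θ (kelvin θ u) z = 0) := by
  obtain ⟨j, hj⟩ := Function.ne_iff.mp hz0
  have hz : 0 < ∑ i, z i :=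
    sum_pos' (fun i _ => hznn i) ⟨j, mem_univ j, (hznn j).lt_of_ne' hj⟩
  have hmain : Lop θ (kelvin θ u) z = kelvin θ (fun w => (∑ i, w i) ^ 2 * Lop θ u w) z := by
    rw [kelvin_eq_kelvinPow, kelvin_eq_kelvinPow, ← kelvinPow_sub_two _ _ hz,
      Lop_kelvinPow θ _ hz (hu.contDiffAt (hUopen.mem_nhds hzU)),
      show ∑ i, θ i + 2 * (1 - (∑ i, θ i) / 2) - 2 = 0 by ring, zero_mul, add_zero]
  refine ⟨hmain, fun hLu => ?_⟩
  rw [hmain, kelvin, hLu _ hzU, mul_zero, mul_zero]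

/-- if `u` is `C²` on an open set `U` inside the punctured
nonnegative orthant, then on `I(U)` one has `L K[u] = K[Ψ]` where
`Ψ(z) = (∑ zᵢ)² L u(z)`; in particular if `L u = 0` on `U` then `L K[u] = 0`
on `I(U)`. -/
theorem stmt5 (n : ℕ) (θ : Fin n → ℝ) (hθ : ∀ i, 0 ≤ θ i) (hθ0 : 2 < ∑ i, θ i)
    (U : Set (Fin n → ℝ)) (hUopen : IsOpen U)
    (hU : U ⊆ {z | (∀ i, 0 ≤ z i) ∧ z ≠ 0})
    (u : (Fin n → ℝ) → ℝ) (hu : ContDiffOn ℝ 2 u U)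
    (z : Fin n → ℝ) (hznn : ∀ i, 0 ≤ z i) (hz0 : z ≠ 0) (hzU : invMap z ∈ U) :
    Lop θ (kelvin θ u) z
        = kelvin θ (fun w => (∑ i, w i) ^ 2 * Lop θ u w) z
      ∧ ((∀ w ∈ U, Lop θ u w = 0) → Lop θ (kelvin θ u) z = 0) :=
  stmt5_general n θ U hUopen u hu z hznn hz0 hzU
end

section
/- For 0 ≤ s < 1 and a positive integer r, with p = s/(1+s) and q = 1/(1+s), one has (1−s) ∑_{m=0}^∞ C(2m+r−1, m) p^m q^{m+r} = 1, where C(·,·) is the binomial coefficient. -/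
open Finset Filter Topology

/-!
Put `D(n, a) = ∑ₖ C(n, k) s^max(k, a - k)`. Pascal's rule gives `(1 + s) D(n, a) = D(n + 1, a + 1)`
up to the diagonal term `2k = a`, which contributes `(1 - s) s^k C(n, k)`. Applying this twice,
the remainders `ρ_M = D(2M + r - 1, 2M) / (1 + s)^(2M + r - 1)` telescope: `ρ_M - ρ_{M+1}` is `1 - s`
times the `M`-th term of the series. Finally `ρ_0 = 1` by the binomial theorem, and
`ρ_M ≤ (2 / (1 + s))^(r - 1) (4s / (1 + s)²)^M → 0` because `4s < (1 + s)²` for `s ≠ 1`.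
-/

namespace CentralBinomSeries

variable {R : Type*}

theorem hasSum_of_eq_sub_succ {f g : ℕ → ℝ} {l : ℝ} (hf : ∀ n, 0 ≤ f n)
    (hfg : ∀ n, f n = g n - g (n + 1)) (hg : Tendsto g atTop (𝓝 l)) : HasSum f (g 0 - l) :=
  (hasSum_iff_tendsto_nat_of_nonneg hf _).2 <| by
    simpa only [hfg, sum_range_sub'] using tendsto_const_nhds.sub hg

theorem sum_range_choose_succ_mul [CommSemiring R] (n : ℕ) (f : ℕ → R) :
    ∑ k ∈ range (n + 2), ((n + 1).choose k : R) * f k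
      = ∑ k ∈ range (n + 1), (n.choose k : R) * (f k + f (k + 1)) := by
  have shift := sum_range_succ' (fun k => (n.choose k : R) * f k) (n + 1)
  rw [sum_range_succ, Nat.choose_succ_self, Nat.cast_zero, zero_mul, add_zero] at shift
  rw [sum_range_succ', mul_comm]
  simp only [Nat.choose_succ_succ', Nat.cast_add, add_mul, sum_add_distrib, mul_add,
    Nat.choose_zero_right, Nat.cast_one, one_mul, mul_one] at shift ⊢
  rw [shift, add_assoc, add_comm]

theorem one_add_mul_pow_max [CommRing R] (s : R) (k a : ℕ) :
    (1 + s) * s ^ max k (a - k)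
      = s ^ max k (a + 1 - k) + s ^ max (k + 1) (a - k)
        + if 2 * k = a then (1 - s) * s ^ k else 0 := by
  rcases lt_trichotomy (2 * k) a with h | h | h
  · rw [if_neg h.ne, max_eq_right (by omega), max_eq_right (by omega), max_eq_right (by omega),
      show a + 1 - k = a - k + 1 by omega]
    ring
  · rw [if_pos h, max_eq_left (by omega), max_eq_right (by omega), max_eq_left (by omega),
      show a + 1 - k = k + 1 by omega]
    ring
  · rw [if_neg h.ne', max_eq_left (by omega), max_eq_left (by omega), max_eq_left (by omega)]
    ring

def binomMaxPowSum [CommSemiring R] (s : R) (n a : ℕ) : R :=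
  ∑ k ∈ range (n + 1), (n.choose k : R) * s ^ max k (a - k)

theorem binomMaxPowSum_zero_right [CommSemiring R] (s : R) (n : ℕ) :
    binomMaxPowSum s n 0 = (1 + s) ^ n := by
  simp [binomMaxPowSum, add_comm (1 : R), add_pow, mul_comm]

theorem one_add_mul_binomMaxPowSum [CommRing R] (s : R) (n a : ℕ) :
    (1 + s) * binomMaxPowSum s n a
      = binomMaxPowSum s (n + 1) (a + 1)
        + ∑ k ∈ range (n + 1), (n.choose k : R) * if 2 * k = a then (1 - s) * s ^ k else 0 := by
  simp only [binomMaxPowSum, sum_range_choose_succ_mul, Nat.add_sub_add_right, mul_sum,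
    ← sum_add_distrib]
  exact sum_congr rfl fun k _ => by rw [mul_left_comm, one_add_mul_pow_max]; ring

theorem one_add_sq_mul_binomMaxPowSum [CommRing R] (s : R) {n M : ℕ} (hM : M ≤ n) :
    (1 + s) ^ 2 * binomMaxPowSum s n (2 * M)
      = binomMaxPowSum s (n + 2) (2 * M + 2) + (1 + s) * (1 - s) * s ^ M * n.choose M := by
  have even := one_add_mul_binomMaxPowSum s n (2 * M)
  have odd := one_add_mul_binomMaxPowSum s (n + 1) (2 * M + 1)
  simp only [Nat.mul_left_cancel_iff two_pos, mul_ite, mul_zero, sum_ite_eq',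
    mem_range, Nat.lt_succ_of_le hM, if_true] at even
  simp only [show ∀ k, 2 * k ≠ 2 * M + 1 by omega, if_false, mul_zero, sum_const_zero,
    add_zero] at odd
  linear_combination (1 + s) * even + odd

theorem binomMaxPowSum_nonneg {s : ℝ} (hs : 0 ≤ s) (n a : ℕ) : 0 ≤ binomMaxPowSum s n a :=
  sum_nonneg fun _ _ => by positivity

theorem binomMaxPowSum_le {s : ℝ} (hs0 : 0 ≤ s) (hs1 : s ≤ 1) (n a : ℕ) :
    binomMaxPowSum s n a ≤ 2 ^ n * s ^ (a / 2) := by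
  calc binomMaxPowSum s n a ≤ ∑ k ∈ range (n + 1), (n.choose k : ℝ) * s ^ (a / 2) :=
        sum_le_sum fun k _ => mul_le_mul_of_nonneg_left
          (pow_le_pow_of_le_one hs0 hs1 (by omega)) (by positivity)
    _ = 2 ^ n * s ^ (a / 2) := by
        rw [← sum_mul, ← Nat.cast_sum, Nat.sum_range_choose, Nat.cast_pow, Nat.cast_ofNat]

section Remainder

variable {K : Type*} [Field K]

def remainder (s : K) (u M : ℕ) : K :=
  binomMaxPowSum s (2 * M + u) (2 * M) / (1 + s) ^ (2 * M + u)

variable {s : K}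

theorem remainder_zero (hs : 1 + s ≠ 0) (u : ℕ) : remainder s u 0 = 1 := by
  simp [remainder, binomMaxPowSum_zero_right, hs]

theorem remainder_sub_remainder_succ (hs : 1 + s ≠ 0) (u M : ℕ) :
    remainder s u M - remainder s u (M + 1)
      = (1 - s) * ((2 * M + u).choose M * s ^ M / (1 + s) ^ (2 * M + u + 1)) := by
  have key := one_add_sq_mul_binomMaxPowSum s (n := 2 * M + u) (M := M) (by omega)
  have hpow := pow_ne_zero (2 * M + u) hs
  unfold remainder
  rw [show 2 * (M + 1) + u = 2 * M + u + 2 by ring, show 2 * (M + 1) = 2 * M + 2 by ring,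
    pow_add _ _ 2, pow_succ]
  generalize 2 * M + u = n at *
  field_simp
  linear_combination (1 + s) ^ (n + 1) * key

end Remainder

theorem tendsto_remainder {s : ℝ} (hs0 : 0 ≤ s) (hs1 : s < 1) (u : ℕ) :
    Tendsto (remainder s u) atTop (𝓝 0) := by
  have hs : 0 < 1 + s := by linarith
  have ratio_lt_one : 4 * s / (1 + s) ^ 2 < 1 := by
    rw [div_lt_one (by positivity)]
    nlinarith [sq_pos_of_pos (sub_pos.2 hs1)]
  have bound : ∀ M, remainder s u M ≤ (2 / (1 + s)) ^ u * (4 * s / (1 + s) ^ 2) ^ M := by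
    intro M
    calc remainder s u M ≤ 2 ^ (2 * M + u) * s ^ M / (1 + s) ^ (2 * M + u) := by
          unfold remainder
          gcongr
          simpa using binomMaxPowSum_le hs0 hs1.le (2 * M + u) (2 * M)
      _ = (2 / (1 + s)) ^ u * (4 * s / (1 + s) ^ 2) ^ M := by
          rw [div_pow, div_pow, mul_pow, pow_add, pow_add, pow_mul, pow_mul]
          field_simp
          norm_num [mul_comm]
  refine squeeze_zero (fun M => div_nonneg (binomMaxPowSum_nonneg hs0 _ _) (by positivity))
    bound ?_
  simpa using (tendsto_pow_atTop_nhds_zero_of_lt_one (by positivity) ratio_lt_one).const_mul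
    ((2 / (1 + s)) ^ u)

end CentralBinomSeries

open CentralBinomSeries in
/-- for `0 ≤ s < 1`, `r ≥ 1`, with `p = s/(1+s)` and `q = 1/(1+s)`,
`(1−s) ∑_{m=0}^∞ C(2m+r−1, m) pᵐ q^{m+r} = 1`. -/
theorem stmt9 (s : ℝ) (hs0 : 0 ≤ s) (hs1 : s < 1) (r : ℕ) (hr : 1 ≤ r) :
    (1 - s) * ∑' m : ℕ,
        ((2 * m + r - 1).choose m : ℝ) * (s / (1 + s)) ^ m * (1 / (1 + s)) ^ (m + r)
      = 1 := by
  obtain ⟨u, rfl⟩ := Nat.exists_eq_add_of_le' hr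
  have hs : 1 + s ≠ 0 := by positivity
  have term_eq : ∀ m : ℕ, (1 - s) * (((2 * m + (u + 1) - 1).choose m : ℝ) * (s / (1 + s)) ^ m
      * (1 / (1 + s)) ^ (m + (u + 1)))
        = remainder s u m - remainder s u (m + 1) := by
    intro m
    rw [remainder_sub_remainder_succ hs, show 2 * m + (u + 1) - 1 = 2 * m + u by omega,
      show 2 * m + u + 1 = m + (m + (u + 1)) by ring, pow_add (1 + s) m, div_pow, one_div_pow]
    field_simp
  have hasSum := hasSum_of_eq_sub_succ (fun m => mul_nonneg (by linarith) (by positivity)) term_eq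
    (tendsto_remainder hs0 hs1 u)
  rw [← tsum_mul_left, hasSum.tsum_eq, remainder_zero hs, sub_zero]
end
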